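/- Let α be an (n-1)-dimensional linear subspace of P^n spanned by the coordinate points (1,0,...,0),...,(0,...,0,1,0), and let P_1,...,P_s be distinct points on α with P_s = (1,0,...,0). Let m_1,...,m_s be positive integers. Write ℘_j ⊂ R = K[X_0,...,X_n] for the defining prime ideal of P_j, and ℘_{jα} ⊂ R_α = K[X_0,...,X_{n-1}] for the defining prime ideal of the corresponding point P_{jα} ∈ P^{n-1}. Set J = ℘_1^{m_1} ∩ ... ∩ ℘_{s-1}^{m_{s-1}} and J_α = ℘_{1α}^{m_1} ∩ ... ∩ ℘_{(s-1)α}^{m_{s-1}}. If b is a non-negative integer with reg(R_α/(J_α + ℘_{sα}^{m_s})) > b, then reg(R/(J + ℘_s^{m_s})) > b. -/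

import Mathlib

/-! Setting `X_n = 0` maps `J + ℘_s^{m_s}` into `J_α + ℘_{sα}^{m_s}`, and every form of `R_α` is
the restriction of the same form read in `R`; hence whenever `R/(J + ℘_s^{m_s})` vanishes in
degree `t`, so does `R_α/(J_α + ℘_{sα}^{m_s})`, and the regularity index can only drop under
restriction. This needs `R/(J + ℘_s^{m_s})` to vanish in some degree at all (`regIndex` is an
`sInf`, which is `0` on the empty set): as `P_s ≠ P_j`, the ideal `℘_j + ℘_s` contains every
variable, so `(X_0, …, X_n)^{∑ (m_j + m_s)} ⊆ ∏ (℘_j^{m_j} + ℘_s^{m_s}) ⊆ J + ℘_s^{m_s}`. -/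

open MvPolynomial

noncomputable section

/-- The defining prime ideal of the point of projective space with homogeneous
coordinates `p`: the ideal generated by the linear forms vanishing at `p`. -/
def pointIdeal {K : Type} [Field K] {N : ℕ} (p : Fin N → K) :
    Ideal (MvPolynomial (Fin N) K) :=
  Ideal.span {f | f.IsHomogeneous 1 ∧ eval p f = 0}

/-- The ideal of the fat point scheme `m₁P₁ + ⋯ + m_sP_s`. -/
def fatIdeal {K : Type} [Field K] {N s : ℕ} (p : Fin s → Fin N → K) (m : Fin s → ℕ) :
    Ideal (MvPolynomial (Fin N) K) :=
  ⨅ i, pointIdeal (p i) ^ (m i)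

/-- `dim_K` of the degree-`t` graded piece of the ideal `I`. -/
def gradedDim (K : Type) [Field K] {N : ℕ} (I : Ideal (MvPolynomial (Fin N) K)) (t : ℕ) : ℕ :=
  Module.finrank K ↥(homogeneousSubmodule (Fin N) K t ⊓ I.restrictScalars K)

/-- The Hilbert function of `R/I` in degree `t`. -/
def hilbFn (K : Type) [Field K] {N : ℕ} (I : Ideal (MvPolynomial (Fin N) K)) (t : ℕ) : ℕ :=
  Module.finrank K ↥(homogeneousSubmodule (Fin N) K t) - gradedDim K I t

/-- The regularity index of `R/I` relative to the multiplicity `e`: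
the least `t` with `H_{R/I}(t) = e`. -/
def regIndex (K : Type) [Field K] {N : ℕ} (I : Ideal (MvPolynomial (Fin N) K)) (e : ℕ) : ℕ :=
  sInf {t | hilbFn K I t = e}

/-- The multiplicity `e(R/I) = ∑ C(mᵢ+n-1, n)` of a fat point scheme in `ℙⁿ`. -/
def fatMult (n : ℕ) {s : ℕ} (m : Fin s → ℕ) : ℕ :=
  ∑ i, (m i + n - 1).choose n

/-- The regularity index of the fat point scheme `m₁P₁ + ⋯ + m_sP_s` in `ℙⁿ`. -/
def regFat (K : Type) [Field K] {n s : ℕ} (p : Fin s → Fin (n + 1) → K) (m : Fin s → ℕ) : ℕ :=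
  regIndex K (fatIdeal p m) (fatMult n m)

/-- The coordinate vectors `p i` represent distinct points of projective space. -/
def ProjDistinct {K : Type} [Field K] {N s : ℕ} (p : Fin s → Fin N → K) : Prop :=
  (∀ i, p i ≠ 0) ∧ ∀ i j, i ≠ j → ∀ c : K, p i ≠ c • p j

/-- The points `p i`, `i ∈ Q`, lie on a `j`-dimensional linear subspace of `ℙⁿ`. -/
def OnLinearSubspace {K : Type} [Field K] {N s : ℕ} (p : Fin s → Fin N → K)
    (Q : Finset (Fin s)) (j : ℕ) : Prop :=
  ∃ W : Submodule K (Fin N → K), Module.finrank K ↥W ≤ j + 1 ∧ ∀ i ∈ Q, p i ∈ W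

open Classical in
/-- The Segre bound `T(Z) = max {T_j(Z) | j = 1,…,n}` for fat points in `ℙⁿ`. -/
def segreBound {K : Type} [Field K] (n : ℕ) {s : ℕ} (p : Fin s → Fin (n + 1) → K)
    (m : Fin s → ℕ) : ℕ :=
  (Finset.Icc 1 n).sup fun j =>
    Finset.univ.powerset.sup fun Q =>
      if Q.Nonempty ∧ OnLinearSubspace p Q j then (∑ i ∈ Q, m i + j - 2) / j else 0

/-- The standard coordinate point `(1,0,…,0)`. -/
def stdPt (K : Type) [Field K] (N : ℕ) : Fin N → K := fun j => if (j : ℕ) = 0 then 1 else 0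

instance {σ R : Type*} [CommSemiring R] [Finite σ] (t : ℕ) :
    Module.Finite R (homogeneousSubmodule σ R t) :=
  Module.Finite.iff_fg.mpr (homogeneousSubmodule_fg σ R t)

theorem MvPolynomial.IsHomogeneous.mem_pow_idealOfVars {σ R : Type*} [CommSemiring R]
    {f : MvPolynomial σ R} {t : ℕ} (hf : f.IsHomogeneous t) : f ∈ idealOfVars σ R ^ t :=
  (mem_pow_idealOfVars_iff t f).mpr fun _ hd => (hf.degree_eq_sum_deg_support hd).le

theorem Ideal.prod_sup_le_inf_sup {ι R : Type*} [CommSemiring R] [DecidableEq ι]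
    (A : ι → Ideal R) (B : Ideal R) (s : Finset ι) :
    ∏ i ∈ s, (A i ⊔ B) ≤ s.inf A ⊔ B := by
  induction s using Finset.induction with
  | empty => simp
  | insert a s ha ih =>
    rw [Finset.prod_insert ha, Finset.inf_insert]
    calc (A a ⊔ B) * ∏ i ∈ s, (A i ⊔ B)
        ≤ (A a ⊔ B) * (s.inf A ⊔ B) := Ideal.mul_mono_right ih
      _ ≤ A a ⊓ s.inf A ⊔ B := by
        rw [Ideal.mul_sup, Ideal.sup_mul, Ideal.sup_mul]
        exact sup_le
          (sup_le (le_sup_of_le_left Ideal.mul_le_inf) (le_sup_of_le_right Ideal.mul_le_left))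
          (sup_le (le_sup_of_le_right Ideal.mul_le_right) (le_sup_of_le_right Ideal.mul_le_left))

section

variable {K : Type} [Field K]

theorem hilbFn_eq_zero_iff {N : ℕ} (I : Ideal (MvPolynomial (Fin N) K)) (t : ℕ) :
    hilbFn K I t = 0 ↔ homogeneousSubmodule (Fin N) K t ≤ I.restrictScalars K := by
  rw [hilbFn, gradedDim, Nat.sub_eq_zero_iff_le]
  refine ⟨fun h => inf_eq_left.mp (Submodule.eq_of_le_of_finrank_le inf_le_left h), fun h => ?_⟩
  rw [inf_eq_left.mpr h]

theorem regIndex_le_regIndex {N M : ℕ} {I : Ideal (MvPolynomial (Fin N) K)}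
    {J : Ideal (MvPolynomial (Fin M) K)} {e : ℕ}
    (hJ : ∃ t, hilbFn K J t = e) (hIJ : ∀ t, hilbFn K J t = e → hilbFn K I t = e) :
    regIndex K I e ≤ regIndex K J e :=
  Nat.sInf_le (hIJ _ (Nat.sInf_mem hJ))

theorem mem_pointIdeal_of_eval_eq_zero {N : ℕ} {v : Fin N → K} {f : MvPolynomial (Fin N) K}
    (hf : f.IsHomogeneous 1) (hv : eval v f = 0) : f ∈ pointIdeal v :=
  Ideal.subset_span ⟨hf, hv⟩

theorem idealOfVars_le_pointIdeal_sup_of_eval_ne_zero {N : ℕ} {v w : Fin N → K}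
    {l : MvPolynomial (Fin N) K} (hl : l.IsHomogeneous 1) (hlv : eval v l = 0)
    (hlw : eval w l ≠ 0) : idealOfVars (Fin N) K ≤ pointIdeal v ⊔ pointIdeal w := by
  refine Ideal.span_le.mpr (Set.range_subset_iff.mpr fun j => ?_)
  set a := w j / eval w l
  have hXj : X j - C a * l ∈ pointIdeal w :=
    mem_pointIdeal_of_eval_eq_zero ((isHomogeneous_X K j).sub (hl.C_mul a)) (by simp [a, hlw])
  have hl_mem : C a * l ∈ pointIdeal v :=
    Ideal.mul_mem_left _ _ (mem_pointIdeal_of_eval_eq_zero hl hlv)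
  rw [← add_sub_cancel (C a * l) (X j)]
  exact Ideal.add_mem _ (Ideal.mem_sup_left hl_mem) (Ideal.mem_sup_right hXj)

theorem idealOfVars_le_pointIdeal_sup {N : ℕ} {v w : Fin N → K} (hv : v ≠ 0)
    (hw : ∀ c : K, w ≠ c • v) : idealOfVars (Fin N) K ≤ pointIdeal v ⊔ pointIdeal w := by
  obtain ⟨k, hk⟩ : ∃ k, v k ≠ 0 := Function.ne_iff.mp hv
  obtain ⟨j, hj⟩ : ∃ j, v k * w j - v j * w k ≠ 0 := by
    by_contra! h
    refine hw (w k / v k) (funext fun j => ?_)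
    rw [Pi.smul_apply, smul_eq_mul, div_mul_eq_mul_div, eq_div_iff hk]
    linear_combination h j
  refine idealOfVars_le_pointIdeal_sup_of_eval_ne_zero (l := C (v k) * X j - C (v j) * X k)
    (((isHomogeneous_X K j).C_mul _).sub ((isHomogeneous_X K k).C_mul _)) ?_ ?_
  · simp only [map_sub, map_mul, eval_C, eval_X]; ring
  · simpa using hj

theorem pow_idealOfVars_le_fatIdeal_sup {N s : ℕ} {p : Fin s → Fin N → K} {v : Fin N → K}
    (hv : v ≠ 0) (hp : ∀ i, ∀ c : K, p i ≠ c • v) (m : Fin s → ℕ) (ms : ℕ) :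
    idealOfVars (Fin N) K ^ (∑ i, (m i + ms)) ≤ fatIdeal p m ⊔ pointIdeal v ^ ms := by
  have hfactor (i : Fin s) :
      idealOfVars (Fin N) K ^ (m i + ms) ≤ pointIdeal (p i) ^ m i ⊔ pointIdeal v ^ ms := by
    refine (Ideal.pow_right_mono ?_ _).trans Ideal.sup_pow_add_le_pow_sup_pow
    exact (idealOfVars_le_pointIdeal_sup hv (hp i)).trans_eq (sup_comm _ _)
  calc idealOfVars (Fin N) K ^ (∑ i, (m i + ms))
      = ∏ i, idealOfVars (Fin N) K ^ (m i + ms) := by rw [Finset.prod_pow_eq_pow_sum]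
    _ ≤ ∏ i, (pointIdeal (p i) ^ m i ⊔ pointIdeal v ^ ms) :=
      Finset.prod_le_prod' fun i _ => hfactor i
    _ ≤ Finset.univ.inf (fun i => pointIdeal (p i) ^ m i) ⊔ pointIdeal v ^ ms :=
      Ideal.prod_sup_le_inf_sup _ _ _
    _ = fatIdeal p m ⊔ pointIdeal v ^ ms := by rw [fatIdeal, Finset.inf_univ_eq_iInf]

theorem hilbFn_fatIdeal_sup_eq_zero {N s : ℕ} {p : Fin s → Fin N → K} {v : Fin N → K}
    (hv : v ≠ 0) (hp : ∀ i, ∀ c : K, p i ≠ c • v) (m : Fin s → ℕ) (ms : ℕ) :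
    hilbFn K (fatIdeal p m ⊔ pointIdeal v ^ ms) (∑ i, (m i + ms)) = 0 :=
  (hilbFn_eq_zero_iff _ _).mpr fun _ hf =>
    pow_idealOfVars_le_fatIdeal_sup hv hp m ms (IsHomogeneous.mem_pow_idealOfVars hf)

variable {n : ℕ}

variable (K n) in
def restrictHyperplane : MvPolynomial (Fin (n + 1)) K →ₐ[K] MvPolynomial (Fin n) K :=
  aeval (Fin.snoc X 0 : Fin (n + 1) → MvPolynomial (Fin n) K)

theorem MvPolynomial.IsHomogeneous.restrictHyperplane {t : ℕ}
    {f : MvPolynomial (Fin (n + 1)) K} (hf : f.IsHomogeneous t) :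
    (restrictHyperplane K n f).IsHomogeneous t := by
  have hX (i : Fin (n + 1)) :
      (Fin.snoc X 0 : Fin (n + 1) → MvPolynomial (Fin n) K) i |>.IsHomogeneous 1 := by
    induction i using Fin.lastCases with
    | last => simpa using isHomogeneous_zero (Fin n) K 1
    | cast j => simpa using isHomogeneous_X K j
  simpa [_root_.restrictHyperplane] using hf.aeval _ hX

theorem eval_restrictHyperplane (w : Fin n → K) (f : MvPolynomial (Fin (n + 1)) K) :
    eval w (restrictHyperplane K n f) = eval (Fin.snoc w 0) f := by
  rw [restrictHyperplane, map_aeval, coe_eval₂Hom, eval]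
  congr
  · ext; simp
  · funext i
    induction i using Fin.lastCases <;> simp

theorem restrictHyperplane_rename_castSucc (f : MvPolynomial (Fin n) K) :
    restrictHyperplane K n (rename Fin.castSucc f) = f := by
  rw [restrictHyperplane, aeval_rename]
  convert aeval_X_left_apply f
  funext j
  simp

theorem map_pointIdeal_snoc_le (w : Fin n → K) :
    (pointIdeal (Fin.snoc w 0)).map (restrictHyperplane K n) ≤ pointIdeal w := by
  rw [pointIdeal, Ideal.map_span, Ideal.span_le]
  rintro _ ⟨f, ⟨hf, hfw⟩, rfl⟩
  refine mem_pointIdeal_of_eval_eq_zero hf.restrictHyperplane ?_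
  rw [eval_restrictHyperplane, hfw]

theorem map_fatIdeal_sup_le {s : ℕ} (q : Fin s → Fin n → K) (m : Fin s → ℕ) (w : Fin n → K)
    (ms : ℕ) :
    (fatIdeal (fun i => Fin.snoc (q i) 0) m ⊔ pointIdeal (Fin.snoc w 0) ^ ms).map
        (restrictHyperplane K n) ≤ fatIdeal q m ⊔ pointIdeal w ^ ms := by
  rw [Ideal.map_sup, Ideal.map_pow]
  refine sup_le_sup (le_iInf fun i => ?_) (Ideal.pow_right_mono (map_pointIdeal_snoc_le w) _)
  rw [fatIdeal]
  refine (Ideal.map_mono (iInf_le _ i)).trans ?_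
  rw [Ideal.map_pow]
  exact Ideal.pow_right_mono (map_pointIdeal_snoc_le (q i)) _

theorem hilbFn_eq_zero_of_map_restrictHyperplane_le {I : Ideal (MvPolynomial (Fin n) K)}
    {J : Ideal (MvPolynomial (Fin (n + 1)) K)} (hJI : J.map (restrictHyperplane K n) ≤ I)
    {t : ℕ} (hJ : hilbFn K J t = 0) : hilbFn K I t = 0 := by
  rw [hilbFn_eq_zero_iff] at hJ ⊢
  intro f hf
  rw [Submodule.restrictScalars_mem, ← restrictHyperplane_rename_castSucc f]
  exact hJI (Ideal.mem_map_of_mem _ (hJ (IsHomogeneous.rename_isHomogeneous hf)))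

end

theorem stmt4_general {K : Type} [Field K] {n r : ℕ} (hn : 1 ≤ n)
    (p : Fin r → Fin (n + 1) → K) (honα : ∀ i, p i (Fin.last n) = 0)
    (hdist : ProjDistinct (Fin.snoc p (stdPt K (n + 1))))
    (m : Fin r → ℕ) (ms : ℕ) (b : ℕ)
    (q : Fin r → Fin n → K) (hq : ∀ i, ∀ j : Fin n, q i j = p i j.castSucc)
    (hgt : b < regIndex K (fatIdeal q m ⊔ pointIdeal (stdPt K n) ^ ms) 0) :
    b < regIndex K (fatIdeal p m ⊔ pointIdeal (stdPt K (n + 1)) ^ ms) 0 := by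
  have hp : p = fun i => Fin.snoc (q i) 0 := by
    funext i j
    induction j using Fin.lastCases <;> simp [honα, hq]
  have hstd : stdPt K (n + 1) = Fin.snoc (stdPt K n) 0 := by
    funext j
    induction j using Fin.lastCases <;> simp [stdPt, Nat.one_le_iff_ne_zero.mp hn]
  have hstd_ne : stdPt K (n + 1) ≠ 0 := Function.ne_iff.mpr ⟨0, by simp [stdPt]⟩
  have hp_ne (i : Fin r) (c : K) : p i ≠ c • stdPt K (n + 1) := by
    simpa using hdist.2 i.castSucc (Fin.last r) (Fin.castSucc_lt_last i).ne c
  have hmap := map_fatIdeal_sup_le q m (stdPt K n) ms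
  rw [← hp, ← hstd] at hmap
  exact hgt.trans_le (regIndex_le_regIndex ⟨_, hilbFn_fatIdeal_sup_eq_zero hstd_ne hp_ne m ms⟩
    fun _ => hilbFn_eq_zero_of_map_restrictHyperplane_le hmap)

/-- Lemma 3.2: lifting `reg(R_α/(J_α+℘_{sα}^{m_s})) > b` from the hyperplane
`α = {X_n = 0}` to `ℙⁿ`, with `P_s = (1,0,…,0)`. -/
theorem stmt4 {K : Type} [Field K] [IsAlgClosed K] {n r : ℕ} (hn : 1 ≤ n)
    (p : Fin r → Fin (n + 1) → K) (honα : ∀ i, p i (Fin.last n) = 0)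
    (hdist : ProjDistinct (Fin.snoc p (stdPt K (n + 1))))
    (m : Fin r → ℕ) (hm : ∀ i, 0 < m i) (ms : ℕ) (hms : 0 < ms) (b : ℕ)
    (q : Fin r → Fin n → K) (hq : ∀ i, ∀ j : Fin n, q i j = p i j.castSucc)
    (hgt : b < regIndex K (fatIdeal q m ⊔ pointIdeal (stdPt K n) ^ ms) 0) :
    b < regIndex K (fatIdeal p m ⊔ pointIdeal (stdPt K (n + 1)) ^ ms) 0 :=
  stmt4_general hn p honα hdist m ms b q hq hgt
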